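/- Let a, b₁,…,b₅ be integers. There exist integers c₀,…,c₅ with cᵢ ≥ 0 for all i and c₅ > 0 such that a·l - Σbᵢeᵢ = c₀D₀ + c₁D₁ + c₂D₂ + c₃D₃ + c₄D₄ + c₅D₅ (with D₀ = l, D₁ = l-e₁, D₂ = 2l-e₁-e₂, D₃ = 2l-e₁-e₂-e₃, D₄ = 2l-e₁-e₂-e₃-e₄, D₅ = 3l-e₁-e₂-e₃-e₄-e₅ in ℤ⁶) if and only if b₁ ≥ b₂ ≥ b₃ ≥ b₄ ≥ b₅ > 0 and a ≥ b₁ + b₂ + b₅. -/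
import Mathlib

def lvec : Fin 6 → ℤ := fun k => if k = 0 then 1 else 0

def evec (i : Fin 5) : Fin 6 → ℤ := fun k => if k = i.succ then 1 else 0

def Dvec : Fin 6 → (Fin 6 → ℤ)
  | 0 => lvec
  | 1 => lvec - evec 0
  | 2 => 2 • lvec - evec 0 - evec 1
  | 3 => 2 • lvec - evec 0 - evec 1 - evec 2
  | 4 => 2 • lvec - evec 0 - evec 1 - evec 2 - evec 3
  | 5 => 3 • lvec - evec 0 - evec 1 - evec 2 - evec 3 - evec 4

lemma vec6_five (x y z w u v : ℤ) : ![x,y,z,w,u,v] 5 = v := rfl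

theorem very_ample_combination_iff (a b1 b2 b3 b4 b5 : ℤ) :
    (∃ c : Fin 6 → ℤ, (∀ i, 0 ≤ c i) ∧ 0 < c 5 ∧
        a • lvec - (b1 • evec 0 + b2 • evec 1 + b3 • evec 2 + b4 • evec 3 + b5 • evec 4) =
          ∑ i, c i • Dvec i) ↔
      (b1 ≥ b2 ∧ b2 ≥ b3 ∧ b3 ≥ b4 ∧ b4 ≥ b5 ∧ b5 > 0 ∧ a ≥ b1 + b2 + b5) := by
  constructor
  · rintro ⟨c, hc, hc5, heq⟩
    have h0 := congrFun heq 0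
    have h1 := congrFun heq 1
    have h2 := congrFun heq 2
    have h3 := congrFun heq 3
    have h4 := congrFun heq 4
    have h5 := congrFun heq 5
    simp [Fin.sum_univ_six, lvec, evec, Dvec, Fin.succ] at h0 h1 h2 h3 h4 h5
    have g0 := hc 0; have g1 := hc 1; have g2 := hc 2; have g3 := hc 3; have g4 := hc 4
    refine ⟨by linarith, by linarith, by linarith, by linarith, by linarith, by linarith⟩
  · rintro ⟨h1, h2, h3, h4, h5, h6⟩
    refine ⟨![a - b1 - b2 - b5, b1 - b2, b2 - b3, b3 - b4, b4 - b5, b5], ?_, ?_, ?_⟩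
    · intro i
      fin_cases i <;> simp [vec6_five] <;> linarith
    · simpa using h5
    · funext k
      fin_cases k <;>
        simp [Fin.sum_univ_six, lvec, evec, Dvec, Fin.succ, vec6_five] <;> ring
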